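/- Let g : ℝⁿ → ℝ be differentiable at a point z, let u be convex with u ≤ g on an affine subspace V through z (identified with ℝ^k × {0} after a rigid motion) and u(z) = g(z). Then for every p ∈ ∂u(z) and every unit vector v ∈ V, ⟨p, v⟩ = ⟨∇(g|_V)(z), v⟩; i.e., the component of any subgradient of u at z along V is uniquely determined. Hence ∂u(z) is contained in an (n−k)-dimensional affine subspace of ℝⁿ. -/
import Mathlib


open RealInnerProductSpace

/-- The subdifferential of `f : ℝⁿ → ℝ` at `p`. -/
def subdiff {n : ℕ} (f : EuclideanSpace ℝ (Fin n) → ℝ)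
    (p : EuclideanSpace ℝ (Fin n)) : Set (EuclideanSpace ℝ (Fin n)) :=
  {g | ∀ q, f q ≥ f p + ⟪g, q - p⟫}

/-- If the convex `u` lies below `g` on a `k`-dimensional affine subspace `V`
through `z`, touches it at `z`, and `g` restricted to `V` is differentiable at
`z` with gradient (represented by) `gV`, then the component of any subgradient
of `u` at `z` along `V` is determined: `⟨p, v⟩ = ⟨gV, v⟩` for every unit vector
`v` in the direction of `V`.  Hence `∂u(z)` lies in an `(n-k)`-dimensional
affine subspace. -/
theorem subgradient_component_determined {n k : ℕ} (hk : 1 ≤ k)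
    (hkn : k ≤ n - 1)
    (u g : EuclideanSpace ℝ (Fin n) → ℝ)
    (hu : ConvexOn ℝ Set.univ u)
    (V : AffineSubspace ℝ (EuclideanSpace ℝ (Fin n)))
    (z : EuclideanSpace ℝ (Fin n)) (hz : z ∈ V)
    (hdim : Module.finrank ℝ V.direction = k)
    (gV : EuclideanSpace ℝ (Fin n))
    (hg : ∀ v ∈ V.direction, HasDerivAt (fun t : ℝ => g (z + t • v)) ⟪gV, v⟫ 0)
    (hle : ∀ q ∈ (V : Set (EuclideanSpace ℝ (Fin n))), u q ≤ g q)
    (heq : u z = g z) :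
    ∀ p ∈ subdiff u z, ∀ v ∈ V.direction, ‖v‖ = 1 → ⟪p, v⟫ = ⟪gV, v⟫ := by
  intro p hp v hv hv1
  set f : ℝ → ℝ := fun t => g (z + t • v) - (u z + t * ⟪p, v⟫) with hf
  have hderiv : HasDerivAt f (⟪gV, v⟫ - ⟪p, v⟫) 0 := by
    have h1 := hg v hv
    have h2 : HasDerivAt (fun t : ℝ => u z + t * ⟪p, v⟫) ⟪p, v⟫ 0 := by
      simpa using ((hasDerivAt_id (0:ℝ)).mul_const ⟪p, v⟫).const_add (u z)
    exact h1.sub h2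
  have hmem : ∀ t : ℝ, z + t • v ∈ V := by
    intro t
    have : (t • v) +ᵥ z ∈ V := AffineSubspace.vadd_mem_of_mem_direction
      (V.direction.smul_mem t hv) hz
    simpa [vadd_eq_add, add_comm] using this
  have hnonneg : ∀ t : ℝ, f 0 ≤ f t := by
    intro t
    have h0 : f 0 = 0 := by simp [hf, heq]
    rw [h0]
    have hle' : u (z + t • v) ≤ g (z + t • v) := hle _ (hmem t)
    have hsub : u (z + t • v) ≥ u z + ⟪p, (z + t • v) - z⟫ := hp _
    have : ⟪p, (z + t • v) - z⟫ = t * ⟪p, v⟫ := by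
      simp [real_inner_smul_right, Finset.mul_sum, mul_left_comm]
    rw [this] at hsub
    simp only [hf]
    linarith
  have hmin : IsLocalMin f 0 := Filter.Eventually.of_forall hnonneg
  have := hmin.hasDerivAt_eq_zero hderiv
  linarith
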